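/- arXiv:0908.3829 — 5 statements merged into one kernel-verified Lean document; each statement's English description precedes it below -/
import Mathlib

section
/- Let b ≥ 1, η > 0, and let ψ : [0,∞) → [0,∞) be a decreasing smooth function with -η ≤ ψ'(s) ≤ 0 for all s, and A := ∫₀^∞ s^{b-1} ψ(s) ds > 0. Then ∫₀^∞ s^{b+1} ψ(s) ds ≥ (1/(b+2)) (bA)^{(b+2)/b} ψ(0)^{-2/b} + A ψ(0)²/(6(b+2)η²). -/
lemma aux_cube (d e : ℝ) (hd : 0 ≤ d) (he : 0 ≤ e) : (d+e)^3 ≤ 3*d^3 + 6*e^3 := by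
  nlinarith [hd, he, sq_nonneg (d-e), sq_nonneg (d-2*e), sq_nonneg (2*d-e), sq_nonneg (d-3*e), sq_nonneg (2*d-3*e), sq_nonneg (3*d-2*e), mul_nonneg hd he]

lemma aux_poly (b d e : ℝ) (hb : 1 ≤ b) (hd : 0 ≤ d) (he : 0 ≤ e) :
    2*b*d*(d+e)^3 ≤ 2*(b+2)*d^4 + 4*b^2*(b+2)*d*e^3 + b*(b+2)*e^4 := by
  have hb0 : (0:ℝ) ≤ b - 1 := by linarith
  have hde : 0 ≤ d*e := mul_nonneg hd he
  nlinarith [mul_nonneg hde (sq_nonneg (b*e-d)), mul_nonneg hde (sq_nonneg (b*e-2*d)), mul_nonneg hde (sq_nonneg (2*b*e-d)), mul_nonneg (mul_nonneg hde hb0) (sq_nonneg (b*e-d)), mul_nonneg (mul_nonneg hde hb0) (sq_nonneg e), mul_nonneg (mul_nonneg hde hb0) (sq_nonneg d), sq_nonneg (d^2-b*d*e), mul_nonneg (mul_nonneg hd hd) (sq_nonneg (d-e)), sq_nonneg (d^2 - b*e^2), mul_nonneg hde (sq_nonneg (d-e)), mul_nonneg (mul_nonneg hde hb0) (sq_nonneg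 (d-e)), sq_nonneg (d*e - b*e^2), mul_nonneg (mul_nonneg he he) (sq_nonneg (d - b*e))]

lemma melas_key (b ρ δ ε τ : ℝ) (hb : 1 ≤ b) (hρ : 0 < ρ) (hδ0 : 0 ≤ δ) (hδρ : δ ≤ ρ)
    (hε : 0 ≤ ε) (hτ : τ = min δ (ρ/b)) :
    ρ*(δ+ε)^3/(6*b*(b+2)) ≤ ρ*δ*τ^2 - 2*ρ*τ^3/3 - 2*b*δ*τ^3/3 + b*τ^4/2 + ρ*ε^3/3 + ε^4/12 := by
  have hb0 : (0:ℝ) < b := by linarith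
  have h18 : (18:ℝ) ≤ 6*b*(b+2) := by nlinarith
  have h6pos : (0:ℝ) < 6*b*(b+2) := by nlinarith
  have hcube := aux_cube δ ε hδ0 hε
  have hρnn := hρ.le
  have hεε : 0 ≤ ε^4/12 := by positivity
  rcases le_or_gt (b*δ) ρ with hcase | hcase
  · -- τ = δ
    have hτδ : τ = δ := by
      rw [hτ, min_eq_left]
      rw [le_div_iff₀ hb0]; nlinarith
    rw [hτδ]
    have h1 : b*δ^4 ≤ ρ*δ^3 := by nlinarith [pow_nonneg hδ0 3, pow_nonneg hδ0 4]
    have h2 : ρ*(δ+ε)^3/(6*b*(b+2)) ≤ ρ*(δ+ε)^3/18 :=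
      div_le_div_of_nonneg_left (by positivity) (by norm_num) h18
    have h3 : ρ*(δ+ε)^3/18 ≤ ρ*(3*δ^3+6*ε^3)/18 := by
      have := mul_le_mul_of_nonneg_left hcube hρnn
      linarith
    linarith
  · -- τ = ρ/b
    have hτρ : τ = ρ/b := by
      rw [hτ, min_eq_right]
      rw [div_le_iff₀ hb0]; nlinarith
    have hδpos : 0 < δ := by nlinarith
    obtain ⟨r, hr1, hrδ, hδbr, hbr⟩ : ∃ r, 0 < r ∧ r ≤ δ ∧ δ ≤ b*r ∧ ρ = b*r := by
      have hcan : b*(ρ/b) = ρ := by field_simp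
      refine ⟨ρ/b, by positivity, ?_, ?_, by rw [hcan]⟩
      · rw [div_le_iff₀ hb0]; nlinarith
      · rw [hcan]; exact hδρ
    have hτr : τ = r := by rw [hτρ, hbr]; field_simp
    rw [hτr, hbr]
    have g1 : b*r*(δ+ε)^3/(6*b*(b+2)) = r*(δ+ε)^3/(6*(b+2)) := by
      field_simp
    rw [g1, div_le_iff₀ (by positivity : (0:ℝ) < 6*(b+2))]
    have hpoly := aux_poly b δ ε hb hδ0 hε
    apply le_of_mul_le_mul_left _ (show (0:ℝ) < 2*b*δ by positivity)
    nlinarith [mul_le_mul_of_nonneg_left hpoly hr1.le,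
      mul_nonneg (mul_nonneg (sub_nonneg.2 hδbr) (by positivity : (0:ℝ) ≤ b*r+δ)) (by positivity : (0:ℝ) ≤ (b+2)*δ^2*r),
      mul_nonneg (sub_nonneg.2 hrδ) (by positivity : (0:ℝ) ≤ b*(b+2)*ε^4),
      mul_nonneg (sub_nonneg.2 hrδ) (by positivity : (0:ℝ) ≤ b^2*(b+2)*δ*r^3)]
open intervalIntegral in
lemma integral_cubic (c1 c2 c3 T : ℝ) :
    ∫ u in (0:ℝ)..T, (c1*u + c2*u^2 + c3*u^3) = c1*T^2/2 + c2*T^3/3 + c3*T^4/4 := by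
  have i1 : IntervalIntegrable (fun u:ℝ => c1*u) MeasureTheory.volume 0 T :=
    (continuous_const.mul continuous_id).intervalIntegrable _ _
  have i2 : IntervalIntegrable (fun u:ℝ => c2*u^2) MeasureTheory.volume 0 T :=
    (continuous_const.mul (continuous_pow 2)).intervalIntegrable _ _
  have i3 : IntervalIntegrable (fun u:ℝ => c3*u^3) MeasureTheory.volume 0 T :=
    (continuous_const.mul (continuous_pow 3)).intervalIntegrable _ _
  rw [integral_add (i1.add i2) i3, integral_add i1 i2, integral_const_mul, integral_const_mul,
    integral_const_mul, integral_id, integral_pow, integral_pow]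
  norm_num
  ring

open MeasureTheory Set

set_option maxHeartbeats 2000000 in
/-- Melas-type one-dimensional lemma (inequality (2.6)). -/
theorem melas_lemma (b η : ℝ) (hb : 1 ≤ b) (hη : 0 < η) (ψ : ℝ → ℝ)
    (hψnn : ∀ s, 0 ≤ s → 0 ≤ ψ s)
    (hψsmooth : ContDiffOn ℝ (⊤ : ℕ∞) ψ (Ici 0))
    (hψdec : AntitoneOn ψ (Ici 0))
    (hψder : ∀ s, 0 ≤ s → -η ≤ derivWithin ψ (Ici 0) s ∧ derivWithin ψ (Ici 0) s ≤ 0)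
    (hint1 : IntegrableOn (fun s => s ^ (b - 1) * ψ s) (Ioi 0))
    (hint2 : IntegrableOn (fun s => s ^ (b + 1) * ψ s) (Ioi 0))
    (A : ℝ) (hA : A = ∫ s in Ioi 0, s ^ (b - 1) * ψ s) (hApos : 0 < A) :
    ∫ s in Ioi 0, s ^ (b + 1) * ψ s ≥
      (1 / (b + 2)) * (b * A) ^ ((b + 2) / b) * ψ 0 ^ (-(2 / b)) +
        A * ψ 0 ^ 2 / (6 * (b + 2) * η ^ 2) := by
  have hb0 : (0:ℝ) < b := by linarith
  obtain ⟨M, hMdef⟩ : ∃ m : ℝ, m = ψ 0 := ⟨_, rfl⟩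
  rw [← hMdef]
  -- basic facts about ψ
  have hcont : ContinuousOn ψ (Ici 0) := hψsmooth.continuousOn
  have hψM : ∀ s, 0 ≤ s → ψ s ≤ M := by
    intro s hs; rw [hMdef]; exact hψdec self_mem_Ici hs hs
  have hLip : ∀ x y, 0 ≤ x → x ≤ y → ψ x - ψ y ≤ η * (y - x) := by
    intro x y hx hxy
    have hdiff : DifferentiableOn ℝ ψ (interior (Ici (0:ℝ))) := by
      rw [interior_Ici]
      exact (hψsmooth.differentiableOn (by simp)).mono Ioi_subset_Ici_self
    have hderiv : ∀ z ∈ interior (Ici (0:ℝ)), -η ≤ deriv ψ z := by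
      rw [interior_Ici]
      intro z hz
      rw [← derivWithin_of_mem_nhds (Ici_mem_nhds hz)]
      exact (hψder z (le_of_lt hz)).1
    have := (convex_Ici (0:ℝ)).mul_sub_le_image_sub_of_le_deriv hcont hdiff hderiv x hx y
      (hx.trans hxy) hxy
    linarith
  have hM0 : 0 < M := by
    by_contra hM
    push_neg at hM
    have hz : ∀ s ∈ Ioi (0:ℝ), s ^ (b-1) * ψ s = 0 := by
      intro s hs
      have h1 : ψ s ≤ 0 := le_trans (hψM s (le_of_lt hs)) hM
      have h2 : 0 ≤ ψ s := hψnn s (le_of_lt hs)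
      rw [le_antisymm h1 h2, mul_zero]
    rw [hA, MeasureTheory.setIntegral_congr_fun measurableSet_Ioi hz] at hApos
    simp at hApos
  -- the radius ρ
  have hbA : (0:ℝ) < b*A/M := div_pos (mul_pos hb0 hApos) hM0
  obtain ⟨ρ, hρdef⟩ : ∃ r : ℝ, r = (b*A/M) ^ (1/b) := ⟨_, rfl⟩
  have hρ : 0 < ρ := hρdef ▸ Real.rpow_pos_of_pos hbA _
  have hρb : ρ ^ b = b*A/M := by
    rw [hρdef, ← Real.rpow_mul hbA.le, one_div, inv_mul_cancel₀ (ne_of_gt hb0), Real.rpow_one]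
  have hMρ : M * ρ ^ b = b * A := by
    rw [hρb]; field_simp
  -- the parameters
  obtain ⟨c, hcdef⟩ : ∃ x : ℝ, x = ψ ρ := ⟨_, rfl⟩
  have hc0 : 0 ≤ c := hcdef ▸ hψnn ρ hρ.le
  have hcM : c ≤ M := hcdef ▸ hψM ρ hρ.le
  obtain ⟨δ, hδdef⟩ : ∃ x : ℝ, x = (M - c)/η := ⟨_, rfl⟩
  obtain ⟨ε, hεdef⟩ : ∃ x : ℝ, x = c/η := ⟨_, rfl⟩
  obtain ⟨τ, hτdef⟩ : ∃ x : ℝ, x = min δ (ρ/b) := ⟨_, rfl⟩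
  have hδ0 : 0 ≤ δ := hδdef ▸ div_nonneg (by linarith) hη.le
  have hε0 : 0 ≤ ε := hεdef ▸ div_nonneg hc0 hη.le
  have hδρ : δ ≤ ρ := by
    rw [hδdef, div_le_iff₀ hη]
    have := hLip 0 ρ le_rfl hρ.le
    rw [← hMdef, ← hcdef] at this
    linarith
  have hτ0 : 0 ≤ τ := hτdef ▸ le_min hδ0 (by positivity)
  have hτδ : τ ≤ δ := hτdef ▸ min_le_left _ _
  have hτρb : τ ≤ ρ/b := hτdef ▸ min_le_right _ _
  have hτρ : τ ≤ ρ := hτδ.trans hδρ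
  have hηδ : η * δ = M - c := by rw [hδdef]; field_simp
  have hηε : η * ε = c := by rw [hεdef]; field_simp
  -- power identities
  have hpow2 : ∀ s:ℝ, 0 < s → s ^ (b+1) = s ^ (b-1) * s^2 := by
    intro s hs
    rw [show b+1 = (b-1)+2 by ring, Real.rpow_add hs,
      show (2:ℝ) = ((2:ℕ):ℝ) by norm_num, Real.rpow_natCast]
  have hpow1 : ∀ s:ℝ, 0 < s → s ^ b = s ^ (b-1) * s := by
    intro s hs
    have h := Real.rpow_add hs (b-1) 1
    rw [Real.rpow_one, show b-1+1 = b by ring] at h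
    exact h
  -- the function h
  obtain ⟨hfun, hhfun⟩ : ∃ h : ℝ → ℝ, h = fun s => s ^ (b+1) * ψ s - ρ^2 * (s ^ (b-1) * ψ s) :=
    ⟨_, rfl⟩
  have hh_int : IntegrableOn hfun (Ioi 0) := by
    rw [hhfun]; exact hint2.sub (hint1.const_mul _)
  have hEh : ∫ s in Ioi 0, hfun s
      = (∫ s in Ioi 0, s ^ (b+1) * ψ s) - ρ^2 * ∫ s in Ioi 0, s ^ (b-1) * ψ s := by
    rw [hhfun, MeasureTheory.integral_sub hint2 (hint1.const_mul _),
      MeasureTheory.integral_const_mul]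
  have hsplit : ∫ s in Ioi 0, hfun s = (∫ s in Ioc 0 ρ, hfun s) + ∫ s in Ioi ρ, hfun s := by
    rw [← Ioc_union_Ioi_eq_Ioi hρ.le]
    exact MeasureTheory.setIntegral_union (Ioc_disjoint_Ioi le_rfl) measurableSet_Ioi
      (hh_int.mono_set Ioc_subset_Ioi_self) (hh_int.mono_set (Ioi_subset_Ioi hρ.le))
  -- the elementary integral W on (0, ρ]
  have hIW1 : IntervalIntegrable (fun s:ℝ => s ^ (b+1)) MeasureTheory.volume 0 ρ :=
    intervalIntegral.intervalIntegrable_rpow' (by linarith)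
  have hIW2 : IntervalIntegrable (fun s:ℝ => s ^ (b-1)) MeasureTheory.volume 0 ρ :=
    intervalIntegral.intervalIntegrable_rpow' (by linarith)
  have hWint : IntegrableOn (fun s:ℝ => s ^ (b+1) - ρ^2 * s ^ (b-1)) (Ioc 0 ρ) := by
    rw [← intervalIntegrable_iff_integrableOn_Ioc_of_le hρ.le]
    exact hIW1.sub (hIW2.const_mul _)
  have hWval : ∫ s in Ioc 0 ρ, (s ^ (b+1) - ρ^2 * s ^ (b-1)) = ρ^(b+2)/(b+2) - ρ^2*(ρ^b/b) := by
    rw [← intervalIntegral.integral_of_le hρ.le]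
    rw [intervalIntegral.integral_sub hIW1 (hIW2.const_mul _),
      intervalIntegral.integral_const_mul, integral_rpow (Or.inl (by linarith)),
      integral_rpow (Or.inl (by linarith)),
      Real.zero_rpow (ne_of_gt (by linarith : (0:ℝ) < b+1+1)),
      Real.zero_rpow (ne_of_gt (by linarith : (0:ℝ) < b-1+1)),
      show b+1+1 = b+2 by ring, show b-1+1 = b by ring]
    ring
  -- the nonnegative remainder q on (0, ρ]
  obtain ⟨qfun, hqdef⟩ : ∃ q : ℝ → ℝ, q = fun s => hfun s - M*(s ^ (b+1) - ρ^2 * s ^ (b-1)) :=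
    ⟨_, rfl⟩
  have hfIoc : IntegrableOn hfun (Ioc 0 ρ) := hh_int.mono_set Ioc_subset_Ioi_self
  have hq_int : IntegrableOn qfun (Ioc 0 ρ) := by
    rw [hqdef]; exact hfIoc.sub (hWint.const_mul _)
  have hq_nonneg : ∀ s ∈ Ioc (0:ℝ) ρ, 0 ≤ qfun s := by
    intro s hs
    obtain ⟨hs0, hsρ⟩ := hs
    have e : qfun s = (s ^ (b-1)) * ((M - ψ s) * (ρ^2 - s^2)) := by
      rw [hqdef]
      simp only [hhfun]
      rw [hpow2 s hs0]; ring
    rw [e]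
    exact mul_nonneg (Real.rpow_nonneg hs0.le _)
      (mul_nonneg (by linarith [hψM s hs0.le]) (by nlinarith))
  have hqsplit : ∫ s in Ioc 0 ρ, hfun s
      = M*(ρ^(b+2)/(b+2) - ρ^2*(ρ^b/b)) + ∫ s in Ioc 0 ρ, qfun s := by
    have e : ∫ s in Ioc 0 ρ, qfun s
        = (∫ s in Ioc 0 ρ, hfun s) - M*∫ s in Ioc 0 ρ, (s ^ (b+1) - ρ^2*s ^ (b-1)) := by
      rw [hqdef, MeasureTheory.integral_sub hfIoc (hWint.const_mul M),
        MeasureTheory.integral_const_mul]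
    rw [hWval] at e; linarith
  -- lower bound for the q-integral
  obtain ⟨Pfun, hPdef⟩ : ∃ P : ℝ → ℝ,
      P = fun s => 2*η*(ρ^b*(1 - b*(ρ-s)/ρ))*((ρ-s)*(s-ρ+δ)) := ⟨_, rfl⟩
  obtain ⟨gfun, hgdef⟩ : ∃ g : ℝ → ℝ, g = fun u => (2*η*ρ^b*δ)*u
      + (-(2*η*ρ^b)*(1 + b*δ/ρ))*u^2 + (2*η*ρ^b*(b/ρ))*u^3 := ⟨_, rfl⟩
  have hPcont : Continuous Pfun := by
    rw [hPdef]; fun_prop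
  have hq_mono : ∫ s in Ioc (ρ-τ) ρ, qfun s ≤ ∫ s in Ioc 0 ρ, qfun s := by
    apply MeasureTheory.setIntegral_mono_set hq_int
    · exact (MeasureTheory.ae_restrict_iff' measurableSet_Ioc).2
        (MeasureTheory.ae_of_all _ hq_nonneg)
    · exact HasSubset.Subset.eventuallyLE (Ioc_subset_Ioc (by linarith) le_rfl)
  have hq_point : ∀ s ∈ Ioc (ρ-τ) ρ, Pfun s ≤ qfun s := by
    intro s hs
    obtain ⟨hs1, hs2⟩ := hs
    have hs0 : 0 < s := lt_of_le_of_lt (by linarith) hs1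
    have hρs : ρ - s ≤ τ := by linarith
    have hρs0 : 0 ≤ ρ - s := by linarith
    have hub : η*(s-ρ+δ) ≤ M - ψ s := by
      have h1 := hLip s ρ hs0.le hs2
      rw [← hcdef] at h1
      nlinarith [hηδ]
    have hub0 : 0 ≤ s-ρ+δ := by linarith
    have hbern : ρ^b*(1 - b*(ρ-s)/ρ) ≤ s ^ b := by
      have h1 : -1 ≤ (s-ρ)/ρ := by
        rw [le_div_iff₀ hρ]; linarith
      have h2 := one_add_mul_self_le_rpow_one_add h1 hb
      have h3 : (1:ℝ) + (s-ρ)/ρ = s/ρ := by field_simp; ring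
      rw [h3, Real.div_rpow hs0.le hρ.le] at h2
      have h4 := mul_le_mul_of_nonneg_left h2 (Real.rpow_nonneg hρ.le b)
      rw [mul_div_cancel₀ _ (ne_of_gt (Real.rpow_pos_of_pos hρ b))] at h4
      calc ρ^b*(1 - b*(ρ-s)/ρ) = ρ^b*(1 + b*((s-ρ)/ρ)) := by ring
        _ ≤ s ^ b := h4
    have hqe : qfun s = (M - ψ s) * ((ρ-s)*((ρ+s)*s ^ (b-1))) := by
      rw [hqdef]
      simp only [hhfun]
      rw [hpow2 s hs0]; ring
    have t1 : η*(s-ρ+δ) * ((ρ-s)*((ρ+s)*s ^ (b-1))) ≤ qfun s := by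
      rw [hqe]
      apply mul_le_mul_of_nonneg_right hub
      have h6 : (0:ℝ) ≤ ρ + s := by linarith
      positivity
    have t2 : 2*(s ^ b) ≤ (ρ+s)*s ^ (b-1) := by
      rw [hpow1 s hs0]
      have h5 : 2*s ≤ ρ + s := by linarith
      have := mul_le_mul_of_nonneg_right h5 (Real.rpow_nonneg hs0.le (b-1))
      nlinarith [Real.rpow_nonneg hs0.le (b-1)]
    have t3 : 0 ≤ η*(s-ρ+δ)*(ρ-s) := by positivity
    have t4 : (η*(s-ρ+δ)*(ρ-s)) * (2*(ρ^b*(1 - b*(ρ-s)/ρ))) ≤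
        (η*(s-ρ+δ)*(ρ-s)) * ((ρ+s)*s ^ (b-1)) := by
      apply mul_le_mul_of_nonneg_left _ t3
      calc 2*(ρ^b*(1 - b*(ρ-s)/ρ)) ≤ 2*(s ^ b) := by linarith [hbern]
        _ ≤ (ρ+s)*s ^ (b-1) := t2
    calc Pfun s = (η*(s-ρ+δ)*(ρ-s)) * (2*(ρ^b*(1 - b*(ρ-s)/ρ))) := by rw [hPdef]; ring
      _ ≤ (η*(s-ρ+δ)*(ρ-s)) * ((ρ+s)*s ^ (b-1)) := t4
      _ = η*(s-ρ+δ) * ((ρ-s)*((ρ+s)*s ^ (b-1))) := by ring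
      _ ≤ qfun s := t1
  have hP_lb : ∫ s in Ioc (ρ-τ) ρ, Pfun s ≤ ∫ s in Ioc (ρ-τ) ρ, qfun s :=
    MeasureTheory.setIntegral_mono_on (hPcont.integrableOn_Ioc)
      (hq_int.mono_set (Ioc_subset_Ioc (by linarith) le_rfl)) measurableSet_Ioc hq_point
  -- compute the P integral
  have hPeq : ∀ s : ℝ, Pfun s = gfun (ρ - s) := by
    intro s
    rw [hPdef, hgdef]
    field_simp
    ring
  have hPval : ∫ s in Ioc (ρ-τ) ρ, Pfun s
      = (2*η*ρ^b*δ)*τ^2/2 + (-(2*η*ρ^b)*(1 + b*δ/ρ))*τ^3/3 + (2*η*ρ^b*(b/ρ))*τ^4/4 := by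
    rw [← intervalIntegral.integral_of_le (by linarith : ρ-τ ≤ ρ)]
    rw [intervalIntegral.integral_congr (fun s _ => hPeq s)]
    rw [intervalIntegral.integral_comp_sub_left gfun ρ]
    rw [show ρ - ρ = 0 by ring, show ρ - (ρ-τ) = τ by ring, hgdef]
    exact integral_cubic _ _ _ _
  -- upper part on (ρ, ∞)
  have hfIoiρ : IntegrableOn hfun (Ioi ρ) := hh_int.mono_set (Ioi_subset_Ioi hρ.le)
  have hf_nonneg_Ioi : ∀ s ∈ Ioi ρ, 0 ≤ hfun s := by
    intro s hs
    have hsρ : ρ < s := hs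
    have hs0 : 0 < s := hρ.trans hsρ
    have e : hfun s = (s ^ (b-1) * ψ s) * (s^2 - ρ^2) := by
      simp only [hhfun]; rw [hpow2 s hs0]; ring
    rw [e]
    exact mul_nonneg (mul_nonneg (Real.rpow_nonneg hs0.le _) (hψnn s hs0.le)) (by nlinarith)
  have hmono2 : ∫ s in Ioc ρ (ρ+ε), hfun s ≤ ∫ s in Ioi ρ, hfun s := by
    apply MeasureTheory.setIntegral_mono_set hfIoiρ
    · exact (MeasureTheory.ae_restrict_iff' measurableSet_Ioi).2
        (MeasureTheory.ae_of_all _ hf_nonneg_Ioi)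
    · exact HasSubset.Subset.eventuallyLE Ioc_subset_Ioi_self
  obtain ⟨Qfun, hQdef⟩ : ∃ Q : ℝ → ℝ,
      Q = fun s => η*ρ^(b-1)*((s-ρ)*((ρ+s)*(ε-(s-ρ)))) := ⟨_, rfl⟩
  have hQcont : Continuous Qfun := by rw [hQdef]; fun_prop
  have hQ_point : ∀ s ∈ Ioc ρ (ρ+ε), Qfun s ≤ hfun s := by
    intro s hs
    obtain ⟨hs1, hs2⟩ := hs
    have hs0 : 0 < s := hρ.trans hs1
    have hψlb : η*(ε-(s-ρ)) ≤ ψ s := by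
      have h1 := hLip ρ s hρ.le hs1.le
      rw [← hcdef] at h1
      nlinarith [hηε]
    have hψlb0 : 0 ≤ η*(ε-(s-ρ)) := by
      have : 0 ≤ ε-(s-ρ) := by linarith
      positivity
    have hsb : ρ^(b-1) ≤ s ^ (b-1) := Real.rpow_le_rpow hρ.le hs1.le (by linarith)
    have hmul : ρ^(b-1)*(η*(ε-(s-ρ))) ≤ s ^ (b-1) * ψ s :=
      mul_le_mul hsb hψlb hψlb0 (Real.rpow_nonneg hs0.le _)
    have e : hfun s = (s ^ (b-1) * ψ s) * (s^2 - ρ^2) := by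
      simp only [hhfun]; rw [hpow2 s hs0]; ring
    have e2 : Qfun s = (ρ^(b-1)*(η*(ε-(s-ρ)))) * (s^2 - ρ^2) := by
      rw [hQdef]; ring
    rw [e, e2]
    exact mul_le_mul_of_nonneg_right hmul (by nlinarith)
  have hQ_lb : ∫ s in Ioc ρ (ρ+ε), Qfun s ≤ ∫ s in Ioc ρ (ρ+ε), hfun s :=
    MeasureTheory.setIntegral_mono_on (hQcont.integrableOn_Ioc)
      (hh_int.mono_set (fun x hx => lt_trans hρ hx.1)) measurableSet_Ioc hQ_point
  obtain ⟨g2, hg2def⟩ : ∃ g : ℝ → ℝ, g = fun u => (η*ρ^(b-1)*(2*ρ*ε))*u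
      + (η*ρ^(b-1)*(ε-2*ρ))*u^2 + (-(η*ρ^(b-1)))*u^3 := ⟨_, rfl⟩
  have hQeq : ∀ s : ℝ, Qfun s = g2 (s - ρ) := by
    intro s
    rw [hQdef, hg2def]
    ring
  have hQval : ∫ s in Ioc ρ (ρ+ε), Qfun s
      = (η*ρ^(b-1)*(2*ρ*ε))*ε^2/2 + (η*ρ^(b-1)*(ε-2*ρ))*ε^3/3 + (-(η*ρ^(b-1)))*ε^4/4 := by
    rw [← intervalIntegral.integral_of_le (by linarith : ρ ≤ ρ+ε)]
    rw [intervalIntegral.integral_congr (fun s _ => hQeq s)]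
    rw [intervalIntegral.integral_comp_sub_right g2 ρ]
    rw [show ρ - ρ = 0 by ring, show ρ + ε - ρ = ε by ring, hg2def]
    exact integral_cubic _ _ _ _
  -- assemble the two lower-order contributions and apply the key inequality
  have hkey := melas_key b ρ δ ε τ hb hρ hδ0 hδρ hε0 hτdef
  have hρb1 : ρ^(b-1) = ρ^b/ρ := Real.rpow_sub_one hρ.ne' b
  have hGQ : ((2*η*ρ^b*δ)*τ^2/2 + (-(2*η*ρ^b)*(1 + b*δ/ρ))*τ^3/3 + (2*η*ρ^b*(b/ρ))*τ^4/4)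
      + ((η*ρ^(b-1)*(2*ρ*ε))*ε^2/2 + (η*ρ^(b-1)*(ε-2*ρ))*ε^3/3 + (-(η*ρ^(b-1)))*ε^4/4)
      = η*ρ^(b-1)*(ρ*δ*τ^2 - 2*ρ*τ^3/3 - 2*b*δ*τ^3/3 + b*τ^4/2 + ρ*ε^3/3 + ε^4/12) := by
    rw [hρb1]
    field_simp
    ring
  have hineq2 : η*ρ^(b-1)*(ρ*(δ+ε)^3/(6*b*(b+2)))
      ≤ ((2*η*ρ^b*δ)*τ^2/2 + (-(2*η*ρ^b)*(1 + b*δ/ρ))*τ^3/3 + (2*η*ρ^b*(b/ρ))*τ^4/4)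
      + ((η*ρ^(b-1)*(2*ρ*ε))*ε^2/2 + (η*ρ^(b-1)*(ε-2*ρ))*ε^3/3 + (-(η*ρ^(b-1)))*ε^4/4) := by
    rw [hGQ]
    exact mul_le_mul_of_nonneg_left hkey (by positivity)
  -- identify the second term
  have hδεM : δ + ε = M/η := by
    rw [hδdef, hεdef]; field_simp; ring
  have hT2 : η*ρ^(b-1)*(ρ*(δ+ε)^3/(6*b*(b+2))) = A*M^2/(6*(b+2)*η^2) := by
    rw [hδεM, hρb1]
    have h1 : η*(ρ^b/ρ)*(ρ*(M/η)^3/(6*b*(b+2))) = (M*ρ^b)*(M^2/(6*b*(b+2)*η^2)) := by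
      field_simp
    rw [h1, hMρ]
    field_simp
  -- identify the first term
  have hρ2 : ρ^2 = (b*A/M)^(2/b) := by
    rw [hρdef, ← Real.rpow_natCast ((b*A/M)^(1/b)) 2, ← Real.rpow_mul hbA.le,
      show (1/b)*((2:ℕ):ℝ) = 2/b by push_cast; ring]
  have hMb : (0:ℝ) < M^(2/b) := Real.rpow_pos_of_pos hM0 _
  have hT1 : ρ^2*A + M*(ρ^(b+2)/(b+2) - ρ^2*(ρ^b/b)) = (1/(b+2))*(b*A)^((b+2)/b)*M^(-(2/b)) := by
    have h1 : ρ^(b+2) = ρ^b*ρ^2 := by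
      rw [show (b+2:ℝ) = b + ((2:ℕ):ℝ) by push_cast; ring, Real.rpow_add hρ, Real.rpow_natCast]
    have h2 : (b*A)^((b+2)/b) = (b*A)*(b*A)^(2/b) := by
      rw [show (b+2)/b = 1 + 2/b by field_simp, Real.rpow_add (mul_pos hb0 hApos),
        Real.rpow_one]
    have h3 : M^(-(2/b)) = 1/(M^(2/b)) := by
      rw [Real.rpow_neg hM0.le, one_div]
    have h4 : (b*A)^(2/b) = (b*A/M)^(2/b) * M^(2/b) := by
      rw [← Real.mul_rpow (div_nonneg (mul_pos hb0 hApos).le hM0.le) hM0.le,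
        div_mul_cancel₀ _ (ne_of_gt hM0)]
    rw [h1, h2, h3, h4, ← hρ2,
      show M*(ρ^b*ρ^2/(b+2) - ρ^2*(ρ^b/b)) = (M*ρ^b)*(ρ^2/(b+2)) - (M*ρ^b)*(ρ^2/b) by ring,
      hMρ]
    field_simp
    ring
  -- final assembly
  have hArw : ρ^2 * (∫ s in Ioi 0, s ^ (b-1) * ψ s) = ρ^2*A := by rw [← hA]
  rw [ge_iff_le]
  linarith [hArw, hEh, hsplit, hqsplit, hq_mono, hP_lb, hPval, hmono2, hQ_lb, hQval, hineq2, hT1, hT2]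
end

section
/- Let Ω be a bounded domain in ℝⁿ with center of mass at the origin. Then the moment of inertia I(Ω) = ∫_Ω |x|² dx satisfies I(Ω) ≥ (n/(n+2)) V(Ω) (V(Ω)/Bₙ)^{2/n}, where V(Ω) is the volume of Ω and Bₙ is the volume of the unit ball in ℝⁿ. -/
open MeasureTheory Set

/-- The volume of the unit ball in `ℝⁿ`. -/
noncomputable def unitBallVol (n : ℕ) : ℝ :=
  (volume (Metric.ball (0 : EuclideanSpace ℝ (Fin n)) 1)).toReal

/-!
Among sets of a given finite measure, `∫ ‖x‖ ^ k` is smallest on the centred ball `B_R`: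
trading the part of `s` outside `B_R` for the equally large part of `B_R` missing from `s`
only moves mass from where `‖x‖ ≥ R` to where `‖x‖ ≤ R`. The integral over `B_R` is then
computed in polar coordinates.
-/

open Metric Module

theorem setIntegral_le_setIntegral_of_measure_eq {α : Type*} [MeasurableSpace α]
    {μ : Measure α} {f : α → ℝ} {s t : Set α} (c : ℝ) (hs : MeasurableSet s)
    (ht : MeasurableSet t) (hst : μ s = μ t) (hs_fin : μ s ≠ ⊤)
    (hfs : IntegrableOn f s μ) (hft : IntegrableOn f t μ)
    (hf_le : ∀ x ∈ s \ t, f x ≤ c) (hf_ge : ∀ x ∈ t \ s, c ≤ f x) :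
    ∫ x in s, f x ∂μ ≤ ∫ x in t, f x ∂μ := by
  have hsdiff : μ (s \ t) = μ (t \ s) := measure_sdiff_symm hs.nullMeasurableSet
    ht.nullMeasurableSet hst (measure_ne_top_of_subset inter_subset_left hs_fin)
  have hsdiff_fin : μ (s \ t) ≠ ⊤ := measure_ne_top_of_subset sdiff_subset hs_fin
  have hsdiff_le : ∫ x in s \ t, f x ∂μ ≤ ∫ x in t \ s, f x ∂μ :=
    calc ∫ x in s \ t, f x ∂μ ≤ ∫ _ in s \ t, c ∂μ :=
          setIntegral_mono_on (hfs.mono_set sdiff_subset) (integrableOn_const hsdiff_fin)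
            (hs.diff ht) hf_le
      _ = c * μ.real (t \ s) := by
          rw [setIntegral_const, smul_eq_mul, mul_comm, measureReal_def, measureReal_def, hsdiff]
      _ ≤ ∫ x in t \ s, f x ∂μ :=
          setIntegral_ge_of_const_le_real (ht.diff hs) (hsdiff ▸ hsdiff_fin) hf_ge
            (hft.mono_set sdiff_subset)
  rw [← integral_inter_add_sdiff ht hfs, ← integral_inter_add_sdiff hs hft, inter_comm]
  gcongr

theorem Continuous.integrableOn_of_isBounded {X : Type*} [PseudoMetricSpace X] [ProperSpace X]
    [MeasurableSpace X] [OpensMeasurableSpace X] {μ : Measure X} [IsFiniteMeasureOnCompacts μ]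
    {f : X → ℝ} (hf : Continuous f) {s : Set X} (hs : Bornology.IsBounded s) :
    IntegrableOn f s μ :=
  (hf.locallyIntegrable.integrableOn_isCompact hs.isCompact_closure).mono_set subset_closure

theorem measureReal_ball_pos {X : Type*} [PseudoMetricSpace X] [ProperSpace X] [MeasurableSpace X]
    (μ : Measure X) [μ.IsOpenPosMeasure] [IsFiniteMeasureOnCompacts μ] (x : X) {r : ℝ}
    (hr : 0 < r) : 0 < μ.real (ball x r) :=
  ENNReal.toReal_pos (measure_ball_pos μ x hr).ne' measure_ball_lt_top.ne

section AddHaar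

variable {E : Type*} [NormedAddCommGroup E] [NormedSpace ℝ E] [FiniteDimensional ℝ E]
  [MeasurableSpace E] [BorelSpace E] [Nontrivial E] (μ : Measure E) [μ.IsAddHaarMeasure]

theorem setIntegral_ball_norm_pow (k : ℕ) {R : ℝ} (hR : 0 ≤ R) :
    ∫ x in ball (0 : E) R, ‖x‖ ^ k ∂μ =
      finrank ℝ E / (finrank ℝ E + k) * μ.real (ball 0 1) * R ^ (finrank ℝ E + k) := by
  have hd : 0 < finrank ℝ E := finrank_pos
  have hind : ∫ x in ball (0 : E) R, ‖x‖ ^ k ∂μ = ∫ x, (Iio R).indicator (· ^ k) ‖x‖ ∂μ := by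
    rw [← integral_indicator measurableSet_ball]
    congr 1 with x
    simp [indicator, mem_ball]
  have hradial : ∀ y : ℝ, y ^ (finrank ℝ E - 1) • (Iio R).indicator (· ^ k) y
      = (Iio R).indicator (· ^ (finrank ℝ E + k - 1)) y := by
    intro y
    by_cases hy : y ∈ Iio R
    · simp only [indicator_of_mem hy, smul_eq_mul, ← pow_add]
      congr 1
      omega
    · simp [indicator_of_notMem hy]
  rw [hind, integral_fun_norm_addHaar, funext hradial, integral_indicator measurableSet_Iio,
    Measure.restrict_restrict measurableSet_Iio, Iio_inter_Ioi, ← integral_Ioc_eq_integral_Ioo,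
    ← intervalIntegral.integral_of_le hR, integral_pow, Nat.sub_add_cancel (by omega),
    zero_pow (by omega), sub_zero]
  simp only [nsmul_eq_mul, smul_eq_mul]
  push_cast [Nat.cast_sub (by omega : 1 ≤ finrank ℝ E + k)]
  ring

theorem addHaar_ball_rpow_inv_finrank {V : ℝ} (hV : 0 ≤ V) :
    μ (ball (0 : E) ((V / μ.real (ball 0 1)) ^ (finrank ℝ E : ℝ)⁻¹)) = ENNReal.ofReal V := by
  have hB := measureReal_ball_pos μ (0 : E) one_pos
  rw [Measure.addHaar_ball μ 0 (by positivity),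
    Real.rpow_inv_natCast_pow (by positivity) finrank_pos.ne',
    ← ofReal_measureReal measure_ball_lt_top.ne, ← ENNReal.ofReal_mul (by positivity),
    div_mul_cancel₀ _ hB.ne']

theorem le_setIntegral_norm_pow (k : ℕ) {s : Set E} (hs : MeasurableSet s) (hs_fin : μ s ≠ ⊤)
    (hint : IntegrableOn (fun x ↦ ‖x‖ ^ k) s μ) :
    finrank ℝ E / (finrank ℝ E + k) * μ.real s *
        (μ.real s / μ.real (ball 0 1)) ^ ((k : ℝ) / finrank ℝ E) ≤ ∫ x in s, ‖x‖ ^ k ∂μ := by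
  set d := finrank ℝ E
  set B := μ.real (ball (0 : E) 1)
  set V := μ.real s
  have hB : 0 < B := measureReal_ball_pos μ 0 one_pos
  set R := (V / B) ^ (d : ℝ)⁻¹
  have hR : 0 ≤ R := by positivity
  have hball : μ (ball 0 R) = μ s := by
    rw [addHaar_ball_rpow_inv_finrank μ measureReal_nonneg, ofReal_measureReal hs_fin]
  have hcmp := setIntegral_le_setIntegral_of_measure_eq (R ^ k) measurableSet_ball hs hball
    measure_ball_lt_top.ne ((continuous_norm.pow k).integrableOn_of_isBounded isBounded_ball) hint
    (fun x hx ↦ pow_le_pow_left₀ (norm_nonneg x) (mem_ball_zero_iff.1 hx.1).le k)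
    (fun x hx ↦ pow_le_pow_left₀ hR (not_lt.1 (hx.2 ∘ mem_ball_zero_iff.2)) k)
  have hRd : R ^ d = V / B := Real.rpow_inv_natCast_pow (by positivity) finrank_pos.ne'
  have hRk : R ^ k = (V / B) ^ ((k : ℝ) / d) := by
    rw [← Real.rpow_mul_natCast (by positivity), inv_mul_eq_div]
  calc _ = d / (d + k) * B * R ^ (d + k) := by
        rw [pow_add, hRd, hRk]
        field_simp
    _ ≤ _ := (setIntegral_ball_norm_pow μ k hR).symm.trans_le hcmp

end AddHaar

theorem moment_of_inertia_lower_bound_general (n : ℕ) (hn : 1 ≤ n)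
    (Ω : Set (EuclideanSpace ℝ (Fin n))) (hΩ : IsOpen Ω)
    (hbd : Bornology.IsBounded Ω) :
    ∫ x in Ω, ‖x‖ ^ 2 ≥
      ((n : ℝ) / (n + 2)) * (volume Ω).toReal *
        ((volume Ω).toReal / unitBallVol n) ^ ((2 : ℝ) / n) := by
  have : Nonempty (Fin n) := Fin.pos_iff_nonempty.mp hn
  simpa [finrank_euclideanSpace_fin, unitBallVol, measureReal_def] using
    le_setIntegral_norm_pow volume 2 hΩ.measurableSet hbd.measure_lt_top.ne
      ((continuous_norm.pow 2).integrableOn_of_isBounded hbd)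

/-- The moment of inertia of a domain with center of mass at the origin is at least
that of the ball of the same volume (inequality (2.1)). -/
theorem moment_of_inertia_lower_bound (n : ℕ) (hn : 1 ≤ n)
    (Ω : Set (EuclideanSpace ℝ (Fin n))) (hΩ : IsOpen Ω) (hne : Ω.Nonempty)
    (hbd : Bornology.IsBounded Ω)
    (hcm : (∫ x in Ω, x : EuclideanSpace ℝ (Fin n)) = 0) :
    ∫ x in Ω, ‖x‖ ^ 2 ≥
      ((n : ℝ) / (n + 2)) * (volume Ω).toReal *
        ((volume Ω).toReal / unitBallVol n) ^ ((2 : ℝ) / n) :=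
  moment_of_inertia_lower_bound_general n hn Ω hΩ hbd
end

section
/- For every integer n ≥ 1, the volume Bₙ = 2π^{n/2}/(n Γ(n/2)) of the unit ball in ℝⁿ satisfies Bₙ^{4/n} / (2π)² < 1/2. -/
open MeasureTheory

lemma gamma_key (n : ℕ) (hn : 1 ≤ n) :
    (1 : ℝ) < 2 ^ n * Real.Gamma (n / 2 + 1) ^ 4 := by
  rcases eq_or_lt_of_le hn with h | h
  · -- n = 1
    subst_vars
    have h32 : Real.Gamma ((1 : ℕ) / 2 + 1) = Real.sqrt Real.pi / 2 := by
      push_cast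
      rw [Real.Gamma_add_one (by norm_num), Real.Gamma_one_half_eq]
      ring
    rw [h32]
    have hπ : Real.pi > 3 := Real.pi_gt_three
    have hs : Real.sqrt Real.pi ^ 2 = Real.pi := Real.sq_sqrt Real.pi_pos.le
    have : (Real.sqrt Real.pi / 2) ^ 4 = Real.pi ^ 2 / 16 := by
      field_simp
      nlinarith [hs]
    rw [this]
    nlinarith
  · -- n ≥ 2
    have h2 : (2 : ℕ) ≤ n := h
    have hge : (2 : ℝ) ≤ (n : ℝ) / 2 + 1 := by
      have : (2 : ℝ) ≤ (n : ℝ) := by exact_mod_cast h2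
      linarith
    have hΓ2 : Real.Gamma 2 = 1 := by
      simpa using Real.Gamma_nat_eq_factorial 1
    have hΓ : (1 : ℝ) ≤ Real.Gamma ((n : ℝ) / 2 + 1) := by
      rcases eq_or_lt_of_le hge with h' | h'
      · rw [← h', hΓ2]
      · have := Real.Gamma_strictMonoOn_Ici (Set.mem_Ici.2 le_rfl)
          (Set.mem_Ici.2 hge) h'
        rw [hΓ2] at this
        exact this.le
    have hpow : (2 : ℝ) ≤ 2 ^ n := by
      calc (2:ℝ) = 2 ^ 1 := (pow_one 2).symm
      _ ≤ 2 ^ n := pow_le_pow_right₀ (by norm_num) hn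
    nlinarith [pow_le_pow_left₀ (by norm_num : (0:ℝ) ≤ 1) hΓ 4]

/-- Inequality (2.21): `Bₙ^{4/n} / (2π)² < 1/2`. -/
theorem ball_volume_ineq (n : ℕ) (hn : 1 ≤ n) :
    unitBallVol n ^ ((4 : ℝ) / n) / (2 * Real.pi) ^ 2 < 1 / 2 := by
  have hne : Nonempty (Fin n) := ⟨⟨0, hn⟩⟩
  have hΓpos : 0 < Real.Gamma ((n : ℝ) / 2 + 1) :=
    Real.Gamma_pos_of_pos (by positivity)
  have hVval : unitBallVol n = Real.sqrt Real.pi ^ n / Real.Gamma (n / 2 + 1) := by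
    rw [unitBallVol, EuclideanSpace.volume_ball]
    rw [Fintype.card_fin]
    rw [ENNReal.ofReal_one, one_pow, one_mul, ENNReal.toReal_ofReal]
    positivity
  set V := unitBallVol n with hV
  have hVpos : 0 < V := by
    rw [hVval]; positivity
  -- goal reduces to V ^ (4/n) < 2 * π ^ 2
  have hπ : 0 < Real.pi := Real.pi_pos
  rw [div_lt_div_iff₀ (by positivity) (by norm_num)]
  have key : V ^ ((4 : ℝ) / n) < 2 * Real.pi ^ 2 := by
    have hn' : (0 : ℝ) < n := by exact_mod_cast hn
    -- compare n-th powers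
    have hlhs : (V ^ ((4 : ℝ) / n)) ^ (n : ℝ) = V ^ (4 : ℝ) := by
      rw [← Real.rpow_mul hVpos.le, div_mul_cancel₀]
      exact hn'.ne'
    have hV4 : V ^ (4 : ℝ) = Real.pi ^ (2 * n) / Real.Gamma (n / 2 + 1) ^ 4 := by
      rw [show (4:ℝ) = ((4:ℕ):ℝ) by norm_num, Real.rpow_natCast, hVval, div_pow,
        ← pow_mul, show n * 4 = 2 * (2 * n) by ring, pow_mul, Real.sq_sqrt hπ.le]
    have hkey2 : V ^ (4 : ℝ) < (2 * Real.pi ^ 2) ^ n := by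
      rw [hV4, mul_pow, ← pow_mul, div_lt_iff₀ (by positivity)]
      have hg := gamma_key n hn
      have hpi2n : (0:ℝ) < Real.pi ^ (2 * n) := by positivity
      calc Real.pi ^ (2 * n) = 1 * Real.pi ^ (2 * n) := (one_mul _).symm
        _ < (2 ^ n * Real.Gamma (↑n / 2 + 1) ^ 4) * Real.pi ^ (2 * n) :=
            mul_lt_mul_of_pos_right hg hpi2n
        _ = 2 ^ n * Real.pi ^ (2 * n) * Real.Gamma (↑n / 2 + 1) ^ 4 := by ring
    -- conclude via strict mono of rpow / pow
    by_contra hcon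
    push_neg at hcon
    have h1 : (2 * Real.pi ^ 2) ^ n ≤ (V ^ ((4:ℝ)/n)) ^ n :=
      pow_le_pow_left₀ (by positivity) hcon n
    have h2 : (V ^ ((4:ℝ)/n)) ^ n = V ^ (4:ℝ) := by
      rw [← hlhs, Real.rpow_natCast]
    rw [h2] at h1
    exact absurd hkey2 (not_lt.2 h1)
  calc V ^ ((4:ℝ)/n) * 2 < (2 * Real.pi ^ 2) * 2 := by
        exact mul_lt_mul_of_pos_right key (by norm_num)
    _ = 1 * (2 * Real.pi) ^ 2 := by ring
end

section
/- Let h : ℝⁿ → [0,∞) be integrable and h* its symmetric decreasing rearrangement. Then ∫_{ℝⁿ} |x|⁴ h(x) dx ≥ ∫_{ℝⁿ} |x|⁴ h*(x) dx. -/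
/-!
By the layer cake formula both sides are integrals over `t > 0` of the `|x|⁴ dx`-measure of the
superlevel sets `{t < h}` and `{t < h*}`. These two sets have the same (finite) Lebesgue measure,
and `{t < h*}` is a ball centred at the origin, where the radially increasing weight is
smallest; so for each `t` the ball carries the least weight (bathtub principle).
-/

open MeasureTheory Set
open scoped ENNReal

section Bathtub

variable {α : Type*} [MeasurableSpace α] {μ : Measure α}

theorem setLIntegral_le_setLIntegral_of_measure_eq {w : α → ℝ≥0∞} {A B : Set α}
    (hA : NullMeasurableSet A μ) (hB : MeasurableSet B) (hAB : μ A = μ B) (hA_fin : μ A ≠ ∞)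
    (hw : ∀ x ∈ B, ∀ y ∉ B, w x ≤ w y) :
    ∫⁻ x in B, w x ∂μ ≤ ∫⁻ x in A, w x ∂μ := by
  wlog hA_meas : MeasurableSet A generalizing A
  · have hA' := hA.toMeasurable_ae_eq
    rw [← setLIntegral_congr hA']
    exact this (measurableSet_toMeasurable μ A).nullMeasurableSet
      (by rwa [measure_congr hA']) (by rwa [measure_congr hA']) (measurableSet_toMeasurable μ A)
  -- `c` separates the values of `w` inside `B` from those outside it.
  set c : ℝ≥0∞ := ⨅ y : ↥Bᶜ, w y
  have hw_B : ∀ x ∈ B, w x ≤ c := fun x hx => le_iInf fun y => hw x hx y y.2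
  have hw_Bc : ∀ y ∉ B, c ≤ w y := fun y hy => iInf_le (fun y : ↥Bᶜ => w y) ⟨y, hy⟩
  have h_sdiff : μ (A \ B) = μ (B \ A) := by
    have h_inter_fin : μ (A ∩ B) ≠ ∞ := measure_ne_top_of_subset inter_subset_left hA_fin
    refine (ENNReal.add_right_inj h_inter_fin).mp ?_
    rw [measure_inter_add_sdiff A hB, inter_comm, measure_inter_add_sdiff B hA_meas, hAB]
  calc ∫⁻ x in B, w x ∂μ = ∫⁻ x in B ∩ A, w x ∂μ + ∫⁻ x in B \ A, w x ∂μ :=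
        (lintegral_inter_add_sdiff w B hA_meas).symm
    _ ≤ ∫⁻ x in A ∩ B, w x ∂μ + ∫⁻ _ in B \ A, c ∂μ := by
        rw [inter_comm]
        gcongr ∫⁻ x in A ∩ B, w x ∂μ + ?_
        exact setLIntegral_mono measurable_const fun x hx => hw_B x hx.1
    _ = ∫⁻ x in A ∩ B, w x ∂μ + ∫⁻ _ in A \ B, c ∂μ := by
        rw [setLIntegral_const, setLIntegral_const, h_sdiff]
    _ ≤ ∫⁻ x in A ∩ B, w x ∂μ + ∫⁻ x in A \ B, w x ∂μ := by
        gcongr ∫⁻ x in A ∩ B, w x ∂μ + ?_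
        exact setLIntegral_mono' (hA_meas.diff hB) fun x hx => hw_Bc x hx.2
    _ = ∫⁻ x in A, w x ∂μ := lintegral_inter_add_sdiff w A hB

theorem lintegral_ofReal_le_of_measure_lt_le {f g : α → ℝ} (hf : 0 ≤ᵐ[μ] f) (hg : 0 ≤ᵐ[μ] g)
    (hf_meas : AEMeasurable f μ) (hg_meas : AEMeasurable g μ)
    (hfg : ∀ t > 0, μ {x | t < g x} ≤ μ {x | t < f x}) :
    ∫⁻ x, ENNReal.ofReal (g x) ∂μ ≤ ∫⁻ x, ENNReal.ofReal (f x) ∂μ := by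
  rw [lintegral_eq_lintegral_meas_lt μ hg hg_meas, lintegral_eq_lintegral_meas_lt μ hf hf_meas]
  exact setLIntegral_mono' measurableSet_Ioi fun t ht => hfg t ht

end Bathtub

section Radial

variable {E : Type*} [NormedAddCommGroup E] [MeasurableSpace E] [OpensMeasurableSpace E]
  {μ : Measure E} [SFinite μ]

theorem lintegral_mul_le_of_equimeasurable_radial {w : E → ℝ≥0∞} (hw : AEMeasurable w μ)
    (hw_mono : ∀ x y, ‖x‖ ≤ ‖y‖ → w x ≤ w y) {f : E → ℝ} (hf_nonneg : ∀ x, 0 ≤ f x)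
    (hf : Integrable f μ) {g : ℝ → ℝ} (hg : Antitone g) (hg_nonneg : ∀ s, 0 ≤ g s)
    (hfg : ∀ t, 0 < t → μ {x | t < f x} = μ {x | t < g ‖x‖}) :
    ∫⁻ x, w x * ENNReal.ofReal (g ‖x‖) ∂μ ≤ ∫⁻ x, w x * ENNReal.ofReal (f x) ∂μ := by
  have hg_meas : Measurable fun x : E => g ‖x‖ := hg.measurable.comp measurable_norm
  have hν : μ.withDensity w ≪ μ := withDensity_absolutelyContinuous μ w
  have h_density : ∀ φ : E → ℝ≥0∞, AEMeasurable φ μ →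
      ∫⁻ x, w x * φ x ∂μ = ∫⁻ x, φ x ∂μ.withDensity w :=
    fun φ hφ => (lintegral_withDensity_eq_lintegral_mul₀ hw hφ).symm
  rw [h_density _ hg_meas.ennreal_ofReal.aemeasurable,
    h_density _ hf.aemeasurable.ennreal_ofReal]
  refine lintegral_ofReal_le_of_measure_lt_le (.of_forall hf_nonneg)
    (.of_forall fun x => hg_nonneg ‖x‖) (hf.aemeasurable.mono_ac hν) hg_meas.aemeasurable
    fun t ht => ?_
  rw [withDensity_apply' w, withDensity_apply' w]
  refine setLIntegral_le_setLIntegral_of_measure_eq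
    (nullMeasurableSet_lt aemeasurable_const hf.aemeasurable) (measurableSet_lt measurable_const
    hg_meas) (hfg t ht) (hf.measure_gt_lt_top ht).ne fun x hx y hy => hw_mono x y ?_
  exact (hg.reflect_lt ((not_lt.mp hy).trans_lt hx)).le

end Radial

/-- Hardy–Littlewood-type inequality (2.3) for the radially increasing weight `|x|⁴`. -/
theorem hardy_littlewood_weight (n : ℕ) (h : EuclideanSpace ℝ (Fin n) → ℝ)
    (hnn : ∀ x, 0 ≤ h x) (hint : Integrable h)
    (g : ℝ → ℝ) (hg : Antitone g) (hgnn : ∀ s, 0 ≤ g s)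
    (hequi : ∀ t, 0 < t →
      volume {x | t < h x} = volume {x : EuclideanSpace ℝ (Fin n) | t < g ‖x‖}) :
    ∫⁻ x, ENNReal.ofReal (‖x‖ ^ 4 * h x) ≥
      ∫⁻ x : EuclideanSpace ℝ (Fin n), ENNReal.ofReal (‖x‖ ^ 4 * g ‖x‖) := by
  simp only [ENNReal.ofReal_mul (pow_nonneg (norm_nonneg _) 4)]
  exact lintegral_mul_le_of_equimeasurable_radial
    (measurable_norm.pow_const 4).ennreal_ofReal.aemeasurable
    (fun x y hxy => ENNReal.ofReal_le_ofReal (by gcongr)) hnn hint hg hgnn hequi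
end

section
/- Let Ω be a bounded domain in ℝⁿ with center of mass at the origin, and let μ₁, …, μₙ be the first n nonzero eigenvalues of the Neumann Laplacian on Ω (Δv = −μv in Ω, ∂v/∂ν = 0 on ∂Ω). Then ∑_{i=1}^n 1/μᵢ ≥ (∫_Ω |x|² dx)/V(Ω). -/
open MeasureTheory Set

/-- The Euclidean Laplacian. -/
noncomputable def lap {n : ℕ} (f : EuclideanSpace ℝ (Fin n) → ℝ)
    (x : EuclideanSpace ℝ (Fin n)) : ℝ :=
  ∑ q : Fin n, iteratedFDeriv ℝ 2 f x ![EuclideanSpace.single q 1, EuclideanSpace.single q 1]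

/-- Ashbaugh–Benguria inequality (2.29): the sum of reciprocals of the first `n`
nonzero Neumann eigenvalues dominates the normalized moment of inertia.
The fact that `μ₁, …, μₙ` are the first nonzero eigenvalues is encoded through the
variational (min-max) characterization `hvar`. -/
theorem ashbaugh_benguria (n : ℕ) (hn : 1 ≤ n)
    (Ω : Set (EuclideanSpace ℝ (Fin n))) (hΩ : IsOpen Ω) (hne : Ω.Nonempty)
    (hbd : Bornology.IsBounded Ω)
    (hcm : (∫ x in Ω, x : EuclideanSpace ℝ (Fin n)) = 0)
    (μ : Fin n → ℝ) (v : Fin n → EuclideanSpace ℝ (Fin n) → ℝ)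
    (ν : EuclideanSpace ℝ (Fin n) → EuclideanSpace ℝ (Fin n))  -- outward unit normal
    (hμpos : ∀ i, 0 < μ i) (hμmono : Monotone μ)
    (hsm : ∀ i, ContDiffOn ℝ (⊤ : ℕ∞) (v i) Ω) (hcont : ∀ i, Continuous (v i))
    (heig : ∀ i, ∀ x ∈ Ω, lap (v i) x = -(μ i) * v i x)
    (hneu : ∀ i, ∀ x ∈ frontier Ω, fderiv ℝ (v i) x (ν x) = 0)
    (hmean : ∀ i, ∫ x in Ω, v i x = 0)
    (hortho : ∀ i j, ∫ x in Ω, v i x * v j x = if i = j then (1 : ℝ) else 0)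
    (hvar : ∀ i : Fin n, ∀ w : EuclideanSpace ℝ (Fin n) → ℝ, ContDiff ℝ (⊤ : ℕ∞) w →
      (∫ x in Ω, w x) = 0 → (∀ j : Fin n, j < i → ∫ x in Ω, w x * v j x = 0) →
      μ i * ∫ x in Ω, (w x) ^ 2 ≤
        ∫ x in Ω, ∑ q : Fin n, (fderiv ℝ w x (EuclideanSpace.single q 1)) ^ 2) :
    ∑ i : Fin n, 1 / μ i ≥ (∫ x in Ω, ‖x‖ ^ 2) / (volume Ω).toReal := by
  classical
  have _iwf : WellFoundedLT (Fin n) := inferInstance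
  have hVlt : volume Ω < ⊤ := hbd.measure_lt_top
  have hVpos : 0 < (volume Ω).toReal :=
    ENNReal.toReal_pos (hΩ.measure_ne_zero volume hne) hVlt.ne
  -- integrability of continuous functions on Ω
  have hint : ∀ (g : EuclideanSpace ℝ (Fin n) → ℝ), Continuous g → IntegrableOn g Ω := fun g hg =>
    (hg.continuousOn.integrableOn_compact hbd.isCompact_closure).mono_set subset_closure
  have hintE : ∀ (g : EuclideanSpace ℝ (Fin n) → EuclideanSpace ℝ (Fin n)), Continuous g →
      IntegrableOn g Ω := fun g hg =>
    (hg.continuousOn.integrableOn_compact hbd.isCompact_closure).mono_set subset_closure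
  have hdim : Module.finrank ℝ (EuclideanSpace ℝ (Fin n)) = Fintype.card (Fin n) := by
    simp [finrank_euclideanSpace]
  -- Gram–Schmidt applied to the moment vectors
  set f : Fin n → EuclideanSpace ℝ (Fin n) := fun j => ∫ x in Ω, v j x • x with hf
  set b : OrthonormalBasis (Fin n) ℝ (EuclideanSpace ℝ (Fin n)) :=
    InnerProductSpace.gramSchmidtOrthonormalBasis hdim f with hb
  -- trial functions
  set w : Fin n → EuclideanSpace ℝ (Fin n) → ℝ := fun p x => inner ℝ (b p) x with hw
  have hwCLM : ∀ p, (w p) = fun x => (innerSL ℝ (b p)) x := fun p => rfl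
  have hwsmooth : ∀ p, ContDiff ℝ (⊤ : ℕ∞) (w p) := fun p => (innerSL ℝ (b p)).contDiff
  have hwcont : ∀ p, Continuous (w p) := fun p => (innerSL ℝ (b p)).continuous
  -- mean zero
  have hwmean : ∀ p, (∫ x in Ω, w p x) = 0 := by
    intro p
    have h1 := integral_inner (𝕜 := ℝ) (μ := volume.restrict Ω) (hintE _ continuous_id) (b p)
    simp only [id] at h1
    calc (∫ x in Ω, w p x) = inner ℝ (b p) (∫ x in Ω, x : EuclideanSpace ℝ (Fin n)) := h1
      _ = 0 := by rw [hcm, inner_zero_right]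
  -- orthogonality to previous eigenfunctions
  have hwortho : ∀ p, ∀ j : Fin n, j < p → (∫ x in Ω, w p x * v j x) = 0 := by
    intro p j hj
    have hc : Continuous fun x : EuclideanSpace ℝ (Fin n) => v j x • x :=
      (hcont j).smul continuous_id
    have h1 : ∀ x : EuclideanSpace ℝ (Fin n), w p x * v j x = inner ℝ (b p) (v j x • x) := by
      intro x
      rw [real_inner_smul_right, hw]
      ring
    calc (∫ x in Ω, w p x * v j x) = ∫ x in Ω, (inner ℝ (b p) (v j x • x) : ℝ) := by
          simp_rw [h1]
      _ = inner ℝ (b p) (f j) :=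
          integral_inner (𝕜 := ℝ) (μ := volume.restrict Ω) (hintE _ hc) (b p)
      _ = 0 := InnerProductSpace.gramSchmidtOrthonormalBasis_inv_triangular hdim f hj
  -- the gradient of each trial function has unit norm
  have hgrad : ∀ p x, ∑ q : Fin n, (fderiv ℝ (w p) x (EuclideanSpace.single q 1)) ^ 2 = 1 := by
    intro p x
    have hfd : fderiv ℝ (w p) x = innerSL ℝ (b p) := by
      rw [hwCLM p]; exact (innerSL ℝ (b p)).fderiv
    rw [hfd]
    have hpar := (EuclideanSpace.basisFun (Fin n) ℝ).sum_inner_mul_inner (b p) (b p)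
    simp only [EuclideanSpace.basisFun_apply] at hpar
    have h2 : ∀ q : Fin n,
        ((innerSL ℝ (b p)) (EuclideanSpace.single q 1)) ^ 2 =
        (inner ℝ (b p) ((EuclideanSpace.single q 1 : EuclideanSpace ℝ (Fin n))) : ℝ) *
          (inner ℝ ((EuclideanSpace.single q 1 : EuclideanSpace ℝ (Fin n))) (b p) : ℝ) := by
      intro q
      rw [real_inner_comm (b p) (EuclideanSpace.single q 1 : EuclideanSpace ℝ (Fin n))]
      simp [innerSL_apply_apply, sq]
    simp_rw [h2]
    rw [hpar, real_inner_self_eq_norm_sq, b.orthonormal.1 p]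
    norm_num
  -- the variational inequality for each trial function
  have key : ∀ p, (∫ x in Ω, (w p x) ^ 2) ≤ (volume Ω).toReal / μ p := by
    intro p
    have h1 := hvar p (w p) (hwsmooth p) (hwmean p) (hwortho p)
    have h2 : (∫ x in Ω, ∑ q : Fin n, (fderiv ℝ (w p) x (EuclideanSpace.single q 1)) ^ 2) =
        (volume Ω).toReal := by
      simp_rw [hgrad p]
      simp [measureReal_def]
    rw [h2] at h1
    rw [le_div_iff₀ (hμpos p)]
    linarith [h1]
  -- Parseval: pointwise decomposition of the moment of inertia
  have hparseval : ∀ x : EuclideanSpace ℝ (Fin n), ‖x‖ ^ 2 = ∑ p, (w p x) ^ 2 := by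
    intro x
    have hpar := b.sum_inner_mul_inner x x
    have h2 : ∀ p, (inner ℝ x (b p) : ℝ) * (inner ℝ (b p) x : ℝ) = (w p x) ^ 2 := by
      intro p
      simp only [hw]
      rw [real_inner_comm x (b p)]
      ring
    simp_rw [h2] at hpar
    rw [← real_inner_self_eq_norm_sq]
    exact hpar.symm
  have hsum : (∫ x in Ω, ‖x‖ ^ 2) = ∑ p, ∫ x in Ω, (w p x) ^ 2 := by
    rw [← integral_finset_sum _ (fun p _ => hint (fun x => w p x ^ 2) ((hwcont p).pow 2))]
    exact setIntegral_congr_fun hΩ.measurableSet fun x _ => hparseval x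
  -- put everything together
  have hmain : (∫ x in Ω, ‖x‖ ^ 2) ≤ (volume Ω).toReal * ∑ i : Fin n, 1 / μ i := by
    rw [hsum, Finset.mul_sum]
    refine Finset.sum_le_sum fun p _ => ?_
    rw [mul_one_div]
    exact key p
  rw [ge_iff_le, div_le_iff₀ hVpos]
  linarith [hmain]
end
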